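/- arXiv:1604.06791 — 2 statements merged into one kernel-verified Lean document; each statement's English description precedes it below -/
import Mathlib

section
/- Necessity of the two-weight A_{-p} condition: suppose 0 < p < ∞ and (u, σ) are weights such that the weak-type inequality u({x : M^𝖣_{-1}(fσ^{-1})(x) > λ}) ≤ C λ^{-p} ∫|f|^p σ holds for all f ∈ L^p(σ) and λ > 0. Then ⨍_Q u ≤ C' (⨍_Q σ)^{p+1} for every dyadic cube Q. -/
/-!
Test the weak-type inequality against `f = 𝟙_Q`. Then `(fσ⁻¹)⁻¹ = σ` on `Q`, so the harmonic
maximal function of `fσ⁻¹` is at least `(⨍_Q σ)⁻¹` on all of `Q`. Choosing `λ = (⨍_Q σ)⁻¹ / 2`,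
the level set contains `Q` while `∫ |f|^p σ = ∫_Q σ`, which gives
`∫_Q u ≤ C 2^p (⨍_Q σ)^p ∫_Q σ`; dividing by `|Q|` is the claim.
-/

open MeasureTheory Set ENNReal Filter

/-- A dyadic grid in `ℝⁿ`: every member is a half-open cube of sidelength `2^k`,
any two members are nested or disjoint, and for each `k` the cubes of
sidelength `2^k` cover `ℝⁿ`. -/
def IsDyadicGrid {n : ℕ} (𝒟 : Set (Set (Fin n → ℝ))) : Prop :=
  (∀ Q ∈ 𝒟, ∃ (k : ℤ) (a : Fin n → ℝ),
      Q = Set.univ.pi fun i => Set.Ico (a i) (a i + (2 : ℝ) ^ k)) ∧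
  (∀ Q ∈ 𝒟, ∀ P ∈ 𝒟, Q ∩ P = ∅ ∨ Q ∩ P = Q ∨ Q ∩ P = P) ∧
  (∀ (k : ℤ) (x : Fin n → ℝ), ∃ Q ∈ 𝒟, x ∈ Q ∧
      ∃ a : Fin n → ℝ, Q = Set.univ.pi fun i => Set.Ico (a i) (a i + (2 : ℝ) ^ k))

/-- The harmonic maximal operator over a family `𝓑`, applied to
`g : ℝⁿ → ℝ≥0∞`: `M₋₁^𝓑 g(x) = sup_{B ∈ 𝓑, x ∈ B} (⨍_B g⁻¹)⁻¹`, with the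
conventions `1/0 = ∞`, `1/∞ = 0` built into `ℝ≥0∞`. -/
noncomputable def harmMax {n : ℕ} (𝓑 : Set (Set (Fin n → ℝ)))
    (g : (Fin n → ℝ) → ℝ≥0∞) (x : Fin n → ℝ) : ℝ≥0∞ :=
  ⨆ (B ∈ 𝓑) (_ : x ∈ B), ((volume B)⁻¹ * ∫⁻ y in B, (g y)⁻¹)⁻¹

variable {n : ℕ}

theorem le_harmMax {𝓑 : Set (Set (Fin n → ℝ))} {g : (Fin n → ℝ) → ℝ≥0∞}
    {B : Set (Fin n → ℝ)} {x : Fin n → ℝ} (hB : B ∈ 𝓑) (hx : x ∈ B) :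
    ((volume B)⁻¹ * ∫⁻ y in B, (g y)⁻¹)⁻¹ ≤ harmMax 𝓑 g x :=
  le_iSup₂_of_le B hB (le_iSup_of_le hx le_rfl)

namespace IsDyadicGrid

variable {𝒟 : Set (Set (Fin n → ℝ))} {Q : Set (Fin n → ℝ)}

theorem measurableSet (hD : IsDyadicGrid 𝒟) (hQ : Q ∈ 𝒟) : MeasurableSet Q := by
  obtain ⟨k, a, rfl⟩ := hD.1 Q hQ
  exact .univ_pi fun _ => measurableSet_Ico

theorem isBounded (hD : IsDyadicGrid 𝒟) (hQ : Q ∈ 𝒟) : Bornology.IsBounded Q := by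
  obtain ⟨k, a, rfl⟩ := hD.1 Q hQ
  exact (Metric.isBounded_Icc a (a + fun _ => (2 : ℝ) ^ k)).subset
    fun x hx => ⟨fun i => (hx i trivial).1, fun i => (hx i trivial).2.le⟩

theorem volume_ne_zero (hD : IsDyadicGrid 𝒟) (hQ : Q ∈ 𝒟) : volume Q ≠ 0 := by
  obtain ⟨k, a, rfl⟩ := hD.1 Q hQ
  simp [volume_pi_pi, Real.volume_Ico, (zpow_pos (two_pos : (0 : ℝ) < 2) k).not_ge]

end IsDyadicGrid

theorem MeasureTheory.LocallyIntegrable.setLIntegral_ofReal_ne_top {X : Type*}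
    [MeasurableSpace X] [PseudoMetricSpace X] [ProperSpace X] {μ : Measure X} {f : X → ℝ}
    (hf : LocallyIntegrable f μ) {Q : Set X} (hQ : Bornology.IsBounded Q) :
    ∫⁻ y in Q, ENNReal.ofReal (f y) ∂μ ≠ ⊤ :=
  ((hf.integrableOn_isCompact hQ.isCompact_closure).mono_set subset_closure).lintegral_lt_top.ne

def HarmMaxWeakType (𝒟 : Set (Set (Fin n → ℝ))) (p : ℝ) (u σ : (Fin n → ℝ) → ℝ)
    (C : ℝ≥0∞) : Prop :=
  ∀ f : (Fin n → ℝ) → ℝ, Measurable f →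
    (∫⁻ x, ENNReal.ofReal |f x| ^ p * ENNReal.ofReal (σ x)) < ⊤ →
    ∀ lam : ℝ≥0∞, 0 < lam →
      ∫⁻ x in {x | lam < harmMax 𝒟
          (fun y => ENNReal.ofReal |f y| * (ENNReal.ofReal (σ y))⁻¹) x},
          ENNReal.ofReal (u x)
        ≤ C * lam⁻¹ ^ p * ∫⁻ x, ENNReal.ofReal |f x| ^ p * ENNReal.ofReal (σ x)

section IndicatorTest

variable {α : Type*} [MeasurableSpace α] {μ : Measure α} {Q : Set α} {σ : α → ℝ}

theorem lintegral_abs_indicator_one_rpow_mul {p : ℝ} (hp : 0 < p) (hQ : MeasurableSet Q) :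
    ∫⁻ x, ENNReal.ofReal |Q.indicator 1 x| ^ p * ENNReal.ofReal (σ x) ∂μ =
      ∫⁻ x in Q, ENNReal.ofReal (σ x) ∂μ := by
  rw [← lintegral_indicator hQ]
  refine lintegral_congr fun x => ?_
  by_cases hx : x ∈ Q <;> simp [hx, ENNReal.zero_rpow_of_pos hp]

theorem setLIntegral_inv_abs_indicator_one_mul_inv (hQ : MeasurableSet Q) :
    ∫⁻ y in Q, (ENNReal.ofReal |Q.indicator 1 y| * (ENNReal.ofReal (σ y))⁻¹)⁻¹ ∂μ =
      ∫⁻ y in Q, ENNReal.ofReal (σ y) ∂μ :=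
  setLIntegral_congr_fun hQ fun y hy => by simp [hy]

end IndicatorTest

theorem HarmMaxWeakType.setLIntegral_le {𝒟 : Set (Set (Fin n → ℝ))} {p : ℝ}
    {u σ : (Fin n → ℝ) → ℝ} {C : ℝ≥0∞} (hweak : HarmMaxWeakType 𝒟 p u σ C) (hp : 0 < p)
    {Q : Set (Fin n → ℝ)} (hQ : Q ∈ 𝒟) (hQm : MeasurableSet Q)
    (hσQ : ∫⁻ y in Q, ENNReal.ofReal (σ y) ≠ ⊤) {lam : ℝ≥0∞} (hlam : 0 < lam)
    (hlamQ : lam < ((volume Q)⁻¹ * ∫⁻ y in Q, ENNReal.ofReal (σ y))⁻¹) :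
    ∫⁻ y in Q, ENNReal.ofReal (u y) ≤ C * lam⁻¹ ^ p * ∫⁻ y in Q, ENNReal.ofReal (σ y) := by
  have hnorm := lintegral_abs_indicator_one_rpow_mul (μ := volume) (σ := σ) hp hQm
  have hQ_sub : Q ⊆ {x | lam < harmMax 𝒟
      (fun y => ENNReal.ofReal |Q.indicator 1 y| * (ENNReal.ofReal (σ y))⁻¹) x} := by
    intro x hx
    refine hlamQ.trans_le ?_
    rw [← setLIntegral_inv_abs_indicator_one_mul_inv hQm]
    exact le_harmMax hQ hx
  calc ∫⁻ y in Q, ENNReal.ofReal (u y)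
      ≤ ∫⁻ x in {x | lam < harmMax 𝒟
          (fun y => ENNReal.ofReal |Q.indicator 1 y| * (ENNReal.ofReal (σ y))⁻¹) x},
          ENNReal.ofReal (u x) := lintegral_mono_set hQ_sub
    _ ≤ _ := hweak _ (measurable_one.indicator hQm) (hnorm ▸ hσQ.lt_top) lam hlam
    _ = _ := by rw [hnorm]

theorem ENNReal.le_mul_two_rpow_mul_rpow_add_one {U B C : ℝ≥0∞} {p : ℝ} (hp : 0 < p)
    (hB : B ≠ ⊤) (h : ∀ lam : ℝ≥0∞, 0 < lam → lam < B⁻¹ → U ≤ C * lam⁻¹ ^ p * B) :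
    U ≤ C * 2 ^ p * B ^ (p + 1) := by
  rcases eq_or_ne B 0 with rfl | hB0
  · simpa [ENNReal.zero_rpow_of_pos (by linarith : 0 < p + 1)] using h 1 one_pos (by simp)
  have hBinv0 : B⁻¹ ≠ 0 := ENNReal.inv_ne_zero.mpr hB
  have hlam := h (B⁻¹ / 2) (ENNReal.div_pos hBinv0 (by norm_num))
    (ENNReal.half_lt_self hBinv0 (ENNReal.inv_ne_top.mpr hB0))
  have hinv : (B⁻¹ / 2)⁻¹ = 2 * B := by
    rw [ENNReal.inv_div (.inl (by norm_num)) (.inl (by norm_num)), div_eq_mul_inv, inv_inv]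
  calc U ≤ C * (2 * B) ^ p * B := hinv ▸ hlam
    _ = C * 2 ^ p * B ^ (p + 1) := by
      rw [ENNReal.mul_rpow_of_nonneg _ _ hp.le, ENNReal.rpow_add p 1 hB0 hB, ENNReal.rpow_one]
      ring

theorem weak_type_implies_dyadic_Ap_general (n : ℕ) (𝒟 : Set (Set (Fin n → ℝ)))
    (hD : IsDyadicGrid 𝒟) (p : ℝ) (hp : 0 < p)
    (u σ : (Fin n → ℝ) → ℝ)
    (hσ : LocallyIntegrable σ volume)
    (C : ℝ≥0∞) (hC : C ≠ ⊤)
    (hweak : ∀ f : (Fin n → ℝ) → ℝ, Measurable f →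
      (∫⁻ x, ENNReal.ofReal |f x| ^ p * ENNReal.ofReal (σ x)) < ⊤ →
      ∀ lam : ℝ≥0∞, 0 < lam →
        ∫⁻ x in {x | lam < harmMax 𝒟
            (fun y => ENNReal.ofReal |f y| * (ENNReal.ofReal (σ y))⁻¹) x},
            ENNReal.ofReal (u x)
          ≤ C * lam⁻¹ ^ p * ∫⁻ x, ENNReal.ofReal |f x| ^ p * ENNReal.ofReal (σ x)) :
    ∃ C' : ℝ≥0∞, C' ≠ ⊤ ∧ ∀ Q ∈ 𝒟,
      (volume Q)⁻¹ * ∫⁻ y in Q, ENNReal.ofReal (u y)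
        ≤ C' * ((volume Q)⁻¹ * ∫⁻ y in Q, ENNReal.ofReal (σ y)) ^ (p + 1) := by
  refine ⟨C * 2 ^ p, ENNReal.mul_ne_top hC (ENNReal.rpow_ne_top_of_nonneg hp.le (by norm_num)),
    fun Q hQ => ?_⟩
  have hσQ := hσ.setLIntegral_ofReal_ne_top (hD.isBounded hQ)
  refine ENNReal.le_mul_two_rpow_mul_rpow_add_one hp
    (ENNReal.mul_ne_top (ENNReal.inv_ne_top.mpr (hD.volume_ne_zero hQ)) hσQ) fun lam hlam hlamQ => ?_
  calc (volume Q)⁻¹ * ∫⁻ y in Q, ENNReal.ofReal (u y)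
      ≤ (volume Q)⁻¹ * (C * lam⁻¹ ^ p * ∫⁻ y in Q, ENNReal.ofReal (σ y)) :=
        mul_le_mul_right
          ((show HarmMaxWeakType 𝒟 p u σ C from hweak).setLIntegral_le hp hQ
            (hD.measurableSet hQ) hσQ hlam hlamQ) _
    _ = C * lam⁻¹ ^ p * ((volume Q)⁻¹ * ∫⁻ y in Q, ENNReal.ofReal (σ y)) := by ring

/-- Necessity of the two-weight `A_{-p}` condition: the weak-type inequality for
the dyadic harmonic maximal operator implies `⨍_Q u ≤ C' (⨍_Q σ)^{p+1}` for all
dyadic cubes `Q`. -/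
theorem weak_type_implies_dyadic_Ap (n : ℕ) (𝒟 : Set (Set (Fin n → ℝ)))
    (hD : IsDyadicGrid 𝒟) (p : ℝ) (hp : 0 < p)
    (u σ : (Fin n → ℝ) → ℝ) (hu0 : 0 ≤ u) (hσ0 : 0 ≤ σ)
    (hu : LocallyIntegrable u volume) (hσ : LocallyIntegrable σ volume)
    (C : ℝ≥0∞) (hC : C ≠ ⊤)
    (hweak : ∀ f : (Fin n → ℝ) → ℝ, Measurable f →
      (∫⁻ x, ENNReal.ofReal |f x| ^ p * ENNReal.ofReal (σ x)) < ⊤ →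
      ∀ lam : ℝ≥0∞, 0 < lam →
        ∫⁻ x in {x | lam < harmMax 𝒟
            (fun y => ENNReal.ofReal |f y| * (ENNReal.ofReal (σ y))⁻¹) x},
            ENNReal.ofReal (u x)
          ≤ C * lam⁻¹ ^ p * ∫⁻ x, ENNReal.ofReal |f x| ^ p * ENNReal.ofReal (σ x)) :
    ∃ C' : ℝ≥0∞, C' ≠ ⊤ ∧ ∀ Q ∈ 𝒟,
      (volume Q)⁻¹ * ∫⁻ y in Q, ENNReal.ofReal (u y)
        ≤ C' * ((volume Q)⁻¹ * ∫⁻ y in Q, ENNReal.ofReal (σ y)) ^ (p + 1) :=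
  weak_type_implies_dyadic_Ap_general n 𝒟 hD p hp u σ hσ C hC hweak
end

section
/- Dyadic A_{-p} implies weak type: let 0 < p < ∞ and (u, σ) be weights with ⨍_Q u ≤ C(⨍_Q σ)^{p+1} for all dyadic cubes Q. Then u({x ∈ ℝ^n : M^𝖣_{-1}(fσ^{-1})(x) > λ}) ≤ C' λ^{-p} ∫_{ℝ^n}|f|^p σ for all f ∈ L^p(σ) and λ > 0. -/
open MeasureTheory Set ENNReal Filter

/-!
The level set `{M₋₁(f σ⁻¹) > λ}` is the union of the dyadic cubes `Q` on which the harmonic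
mean of `|f| σ⁻¹` exceeds `λ`, i.e. `⨍_Q σ / |f| < λ⁻¹`. On such a cube, Hölder's inequality
with exponents `p + 1` and `(p + 1) / p` gives `(∫_Q σ) ^ (p + 1) ≤ (∫_Q |f| ^ p σ) (∫_Q σ / |f|) ^ p`,
and together with the `A_{-p}` condition this yields `u(Q) ≤ C λ⁻ᵖ ∫_Q |f| ^ p σ`. The maximal
such cubes are disjoint and cover the level set, so summing over them gives the weak-type bound
with `C' = C`.
-/

noncomputable section

def halfOpenCube {n : ℕ} (k : ℤ) (a : Fin n → ℝ) : Set (Fin n → ℝ) :=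
  univ.pi fun i => Ico (a i) (a i + (2 : ℝ) ^ k)

section Cube

variable {n : ℕ} {k l : ℤ} {a b : Fin n → ℝ}

lemma measurableSet_halfOpenCube : MeasurableSet (halfOpenCube k a) :=
  .univ_pi fun _ => measurableSet_Ico

lemma interior_halfOpenCube_nonempty : (interior (halfOpenCube k a)).Nonempty := by
  refine Nonempty.mono (interior_maximal (pi_mono fun _ _ => Ioo_subset_Ico_self)
    (isOpen_set_pi finite_univ fun _ _ => isOpen_Ioo)) ?_
  exact univ_pi_nonempty_iff.2 fun i => nonempty_Ioo.2 (lt_add_of_pos_right _ (by positivity))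

lemma volume_halfOpenCube_ne_zero : volume (halfOpenCube k a) ≠ 0 :=
  (Measure.measure_pos_of_nonempty_interior _ interior_halfOpenCube_nonempty).ne'

lemma volume_halfOpenCube_ne_top : volume (halfOpenCube k a) ≠ ⊤ := by
  simp [halfOpenCube, Real.volume_pi_Ico]

lemma halfOpenCube_eq_of_subset (hlk : l ≤ k) (h : halfOpenCube k a ⊆ halfOpenCube l b) :
    halfOpenCube k a = halfOpenCube l b := by
  have hne : halfOpenCube k a ≠ ∅ :=
    (interior_halfOpenCube_nonempty.mono interior_subset).ne_empty
  have hside : (2 : ℝ) ^ l ≤ 2 ^ k := zpow_le_zpow_right₀ one_le_two hlk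
  refine pi_congr rfl fun i _ => ?_
  have hi := (Ico_subset_Ico_iff (lt_add_of_pos_right _ (by positivity))).1
    (((pi_subset_pi_iff.1 h).resolve_right hne) i (mem_univ i))
  rw [show a i = b i by linarith [hi.1, hi.2], show (2 : ℝ) ^ k = 2 ^ l by linarith [hi.1, hi.2]]

end Cube

namespace IsDyadicGrid

variable {n : ℕ} {𝒟 𝒢 : Set (Set (Fin n → ℝ))} {Q P : Set (Fin n → ℝ)}

lemma exists_eq_halfOpenCube (hD : IsDyadicGrid 𝒟) (hQ : Q ∈ 𝒟) :
    ∃ k a, Q = halfOpenCube k a :=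
  hD.1 Q hQ

lemma disjoint_or_subset_or_subset (hD : IsDyadicGrid 𝒟) (hQ : Q ∈ 𝒟) (hP : P ∈ 𝒟) :
    Disjoint Q P ∨ Q ⊆ P ∨ P ⊆ Q := by
  rw [disjoint_iff_inter_eq_empty, ← inter_eq_left, ← inter_eq_right]
  exact hD.2.1 Q hQ P hP

/-- Take the maximal cubes of `𝒢`: bounded sidelength makes every cube of `𝒢` lie in one. -/
lemma exists_pairwiseDisjoint_cover (hD : IsDyadicGrid 𝒟) (h𝒢 : 𝒢 ⊆ 𝒟) (N : ℤ)
    (hN : ∀ Q ∈ 𝒢, ∃ k ≤ N, ∃ a, Q = halfOpenCube k a) :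
    ∃ ℳ ⊆ 𝒢, ℳ.PairwiseDisjoint id ∧ ⋃₀ 𝒢 ⊆ ⋃₀ ℳ := by
  refine ⟨{Q | Maximal (· ∈ 𝒢) Q}, fun Q hQ => hQ.1, ?_, ?_⟩
  · intro Q hQ P hP hne
    rcases hD.disjoint_or_subset_or_subset (h𝒢 hQ.1) (h𝒢 hP.1) with h | h | h
    · exact h
    · exact absurd (subset_antisymm h (hQ.2 hP.1 h)) hne
    · exact absurd (subset_antisymm (hP.2 hQ.1 h) h) hne
  · rintro x ⟨Q₀, hQ₀, hxQ₀⟩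
    obtain ⟨k₀, hk₀, a₀, rfl⟩ := hN Q₀ hQ₀
    obtain ⟨K, ⟨-, a, haK, hxa⟩, hKmax⟩ := Int.exists_greatest_of_bdd
      (P := fun k => k ≤ N ∧ ∃ a, halfOpenCube k a ∈ 𝒢 ∧ x ∈ halfOpenCube k a)
      ⟨N, fun _ hk => hk.1⟩ ⟨k₀, hk₀, a₀, hQ₀, hxQ₀⟩
    refine ⟨halfOpenCube K a, ⟨haK, fun P hP hsub => ?_⟩, hxa⟩
    obtain ⟨l, hlN, b, rfl⟩ := hN P hP
    exact (halfOpenCube_eq_of_subset (hKmax l ⟨hlN, b, hP, hsub hxa⟩) hsub).ge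

lemma measure_sUnion_le_of_forall_scale_le (hD : IsDyadicGrid 𝒟) (h𝒢 : 𝒢 ⊆ 𝒟) {N : ℤ}
    (hN : ∀ Q ∈ 𝒢, ∃ k ≤ N, ∃ a, Q = halfOpenCube k a) {μ ν : Measure (Fin n → ℝ)}
    {c : ℝ≥0∞} (hc : ∀ Q ∈ 𝒢, μ Q ≤ c * ν Q) : μ (⋃₀ 𝒢) ≤ c * ν univ := by
  obtain ⟨ℳ, hℳ𝒢, hdisj, hcover⟩ := hD.exists_pairwiseDisjoint_cover h𝒢 N hN
  have hcube : ∀ Q ∈ ℳ, ∃ k a, Q = halfOpenCube k a := fun Q hQ =>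
    hD.exists_eq_halfOpenCube (h𝒢 (hℳ𝒢 hQ))
  have hℳ : ℳ.Countable := hdisj.countable_of_nonempty_interior fun Q hQ => by
    obtain ⟨k, a, rfl⟩ := hcube Q hQ
    exact interior_halfOpenCube_nonempty
  have hmeas : ∀ Q ∈ ℳ, MeasurableSet Q := fun Q hQ => by
    obtain ⟨k, a, rfl⟩ := hcube Q hQ
    exact measurableSet_halfOpenCube
  calc μ (⋃₀ 𝒢) ≤ μ (⋃₀ ℳ) := measure_mono hcover
    _ ≤ ∑' Q : ℳ, μ Q := by
        rw [sUnion_eq_biUnion]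
        exact measure_biUnion_le μ hℳ _
    _ ≤ ∑' Q : ℳ, c * ν Q := ENNReal.tsum_le_tsum fun Q => hc Q (hℳ𝒢 Q.2)
    _ = c * ν (⋃₀ ℳ) := by rw [ENNReal.tsum_mul_left, measure_sUnion hℳ hdisj hmeas]
    _ ≤ c * ν univ := by gcongr; exact subset_univ _

lemma measure_sUnion_le (hD : IsDyadicGrid 𝒟) (h𝒢 : 𝒢 ⊆ 𝒟) {μ ν : Measure (Fin n → ℝ)}
    {c : ℝ≥0∞} (hc : ∀ Q ∈ 𝒢, μ Q ≤ c * ν Q) : μ (⋃₀ 𝒢) ≤ c * ν univ := by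
  set 𝒢N : ℕ → Set (Set (Fin n → ℝ)) :=
    fun N => {Q ∈ 𝒢 | ∃ k ≤ (N : ℤ), ∃ a, Q = halfOpenCube k a}
  have hunion : ⋃₀ 𝒢 = ⋃ N, ⋃₀ 𝒢N N := by
    refine subset_antisymm (fun x ⟨Q, hQ, hx⟩ => ?_)
      (iUnion_subset fun N => sUnion_mono fun Q hQ => hQ.1)
    obtain ⟨k, a, rfl⟩ := hD.exists_eq_halfOpenCube (h𝒢 hQ)
    exact mem_iUnion.2 ⟨k.toNat, _, ⟨hQ, k, k.self_le_toNat, a, rfl⟩, hx⟩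
  have hmono : Monotone fun N => ⋃₀ 𝒢N N := fun N M hNM =>
    sUnion_mono fun Q ⟨hQ, k, hk, a, ha⟩ => ⟨hQ, k, hk.trans (by exact_mod_cast hNM), a, ha⟩
  rw [hunion, hmono.measure_iUnion]
  exact iSup_le fun N => measure_sUnion_le_of_forall_scale_le hD (fun Q hQ => h𝒢 hQ.1)
    (fun Q hQ => hQ.2) fun Q hQ => hc Q hQ.1

end IsDyadicGrid

section Holder

variable {α : Type*} [MeasurableSpace α] {μ : Measure α} {p : ℝ}

lemma ENNReal.le_rpow_inv_mul_rpow (hp : 0 < p) {a s : ℝ≥0∞} (ha : a ≠ ⊤)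
    (has : (a * s⁻¹)⁻¹ ≠ ⊤) :
    s ≤ (a ^ p * s) ^ (p + 1)⁻¹ * ((a * s⁻¹)⁻¹) ^ (p / (p + 1)) := by
  rcases eq_or_ne s 0 with rfl | hs0
  · exact zero_le
  have ha0 : a ≠ 0 := by rintro rfl; simp at has
  have hs : s ≠ ⊤ := by rintro rfl; simp at has
  have hap : a ^ (p / (p + 1)) ≠ 0 := (ENNReal.rpow_pos (pos_iff_ne_zero.2 ha0) ha).ne'
  have hap' : a ^ (p / (p + 1)) ≠ ⊤ := ENNReal.rpow_ne_top_of_nonneg (by positivity) ha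
  rw [ENNReal.mul_inv (.inl ha0) (.inl ha), inv_inv, ENNReal.mul_rpow_of_nonneg _ _ (by positivity),
    ENNReal.mul_rpow_of_nonneg _ _ (by positivity), ENNReal.inv_rpow, ← ENNReal.rpow_mul,
    ← div_eq_mul_inv]
  refine le_of_eq ?_
  calc s = (a ^ (p / (p + 1)) * (a ^ (p / (p + 1)))⁻¹) * s ^ ((p + 1)⁻¹ + p / (p + 1)) := by
        rw [ENNReal.mul_inv_cancel hap hap', one_mul,
          show (p + 1)⁻¹ + p / (p + 1) = 1 by field_simp; ring, ENNReal.rpow_one]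
    _ = _ := by rw [ENNReal.rpow_add _ _ hs0 hs]; ring

/-- Hölder's inequality with exponents `p + 1` and `(p + 1) / p`, applied to
`w = (F ^ p * w) ^ (1 / (p + 1)) * (w / F) ^ (p / (p + 1))`. -/
lemma lintegral_rpow_add_one_le (hp : 0 < p) {F w : α → ℝ≥0∞} (hF : AEMeasurable F μ)
    (hw : AEMeasurable w μ) (hF_top : ∀ x, F x ≠ ⊤)
    (hfin : ∫⁻ x, (F x * (w x)⁻¹)⁻¹ ∂μ ≠ ⊤) :
    (∫⁻ x, w x ∂μ) ^ (p + 1)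
      ≤ (∫⁻ x, F x ^ p * w x ∂μ) * (∫⁻ x, (F x * (w x)⁻¹)⁻¹ ∂μ) ^ p := by
  set X := ∫⁻ x, F x ^ p * w x ∂μ
  set Y := ∫⁻ x, (F x * (w x)⁻¹)⁻¹ ∂μ
  have hp1 : p + 1 ≠ 0 := by positivity
  have hpq : (p + 1).HolderConjugate ((p + 1) / p) :=
    (Real.holderConjugate_iff_eq_conjExponent (by linarith)).2 (by rw [add_sub_cancel_right])
  have hh : AEMeasurable (fun x => (F x * (w x)⁻¹)⁻¹) μ := (hF.mul hw.inv).inv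
  have hpt : ∀ᵐ x ∂μ, w x ≤ (F x ^ p * w x) ^ (p + 1)⁻¹ * ((F x * (w x)⁻¹)⁻¹) ^ (p / (p + 1)) :=
    (ae_lt_top' hh hfin).mono fun x hx => ENNReal.le_rpow_inv_mul_rpow hp (hF_top x) hx.ne
  have hholder := ENNReal.lintegral_mul_le_Lp_mul_Lq μ hpq
    (((hF.pow_const p).mul hw).pow_const (p + 1)⁻¹) (hh.pow_const (p / (p + 1)))
  calc (∫⁻ x, w x ∂μ) ^ (p + 1)
      ≤ (X ^ (p + 1)⁻¹ * Y ^ (p / (p + 1))) ^ (p + 1) := by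
        refine ENNReal.rpow_le_rpow ((lintegral_mono_ae hpt).trans (hholder.trans_eq ?_))
          (by positivity)
        simp only [Pi.mul_apply, ← ENNReal.rpow_mul, inv_mul_cancel₀ hp1,
          div_mul_div_cancel₀ hp1, div_self hp.ne', ENNReal.rpow_one, one_div, inv_div, X, Y]
    _ = X * Y ^ p := by
        rw [ENNReal.mul_rpow_of_nonneg _ _ (by positivity), ENNReal.rpow_inv_rpow hp1,
          ← ENNReal.rpow_mul, div_mul_cancel₀ _ hp1]

lemma setLIntegral_le_of_lt_harmonicMean (hp : 0 < p) {u F w : α → ℝ≥0∞} {Q : Set α}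
    (hF : AEMeasurable F (μ.restrict Q)) (hw : AEMeasurable w (μ.restrict Q))
    (hF_top : ∀ x, F x ≠ ⊤) (hQ0 : μ Q ≠ 0) (hQtop : μ Q ≠ ⊤) {C lam : ℝ≥0∞}
    (hA : (μ Q)⁻¹ * ∫⁻ x in Q, u x ∂μ ≤ C * ((μ Q)⁻¹ * ∫⁻ x in Q, w x ∂μ) ^ (p + 1))
    (hlam : 0 < lam) (hlt : lam < ((μ Q)⁻¹ * ∫⁻ x in Q, (F x * (w x)⁻¹)⁻¹ ∂μ)⁻¹) :
    ∫⁻ x in Q, u x ∂μ ≤ C * lam⁻¹ ^ p * ∫⁻ x in Q, F x ^ p * w x ∂μ := by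
  set V := μ Q
  set X := ∫⁻ x in Q, F x ^ p * w x ∂μ
  set Y := ∫⁻ x in Q, (F x * (w x)⁻¹)⁻¹ ∂μ
  set S := ∫⁻ x in Q, w x ∂μ
  have hVY : V⁻¹ * Y ≤ lam⁻¹ := (ENNReal.lt_inv_iff_lt_inv.1 hlt).le
  have hY : Y ≠ ⊤ := by
    rw [← one_mul Y, ← ENNReal.mul_inv_cancel hQ0 hQtop, mul_assoc]
    exact ENNReal.mul_ne_top hQtop (hVY.trans_lt (ENNReal.inv_lt_top.2 hlam)).ne
  have hSXY : S ^ (p + 1) ≤ X * Y ^ p := lintegral_rpow_add_one_le hp hF hw hF_top hY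
  calc ∫⁻ x in Q, u x ∂μ = V * (V⁻¹ * ∫⁻ x in Q, u x ∂μ) := by
        rw [← mul_assoc, ENNReal.mul_inv_cancel hQ0 hQtop, one_mul]
    _ ≤ V * (C * (V⁻¹ * S) ^ (p + 1)) := by gcongr
    _ = C * V⁻¹ ^ p * S ^ (p + 1) := by
        rw [ENNReal.mul_rpow_of_nonneg _ _ (by positivity),
          ENNReal.rpow_add _ _ (ENNReal.inv_ne_zero.2 hQtop) (ENNReal.inv_ne_top.2 hQ0),
          ENNReal.rpow_one, show ∀ c d : ℝ≥0∞, V * (C * (c * V⁻¹ * d)) = V * V⁻¹ * (C * c * d)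
            by intros; ring, ENNReal.mul_inv_cancel hQ0 hQtop, one_mul]
    _ ≤ C * V⁻¹ ^ p * (X * Y ^ p) := by gcongr
    _ = C * (V⁻¹ * Y) ^ p * X := by rw [ENNReal.mul_rpow_of_nonneg _ _ hp.le]; ring
    _ ≤ C * lam⁻¹ ^ p * X := by gcongr

end Holder

lemma setOf_lt_harmMax {n : ℕ} (𝓑 : Set (Set (Fin n → ℝ))) (g : (Fin n → ℝ) → ℝ≥0∞)
    (lam : ℝ≥0∞) :
    {x | lam < harmMax 𝓑 g x}
      = ⋃₀ {B ∈ 𝓑 | lam < ((volume B)⁻¹ * ∫⁻ y in B, (g y)⁻¹)⁻¹} := by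
  ext x
  simp only [harmMax, mem_ofPred_eq, lt_iSup_iff, mem_sUnion, exists_prop]
  exact exists_congr fun B => by tauto

theorem dyadic_Ap_implies_weak_type_general (n : ℕ) (𝒟 : Set (Set (Fin n → ℝ)))
    (hD : IsDyadicGrid 𝒟) (p : ℝ) (hp : 0 < p)
    (u σ : (Fin n → ℝ) → ℝ)
    (hσ : LocallyIntegrable σ volume)
    (C : ℝ≥0∞) (hC : C ≠ ⊤)
    (hA : ∀ Q ∈ 𝒟, (volume Q)⁻¹ * ∫⁻ y in Q, ENNReal.ofReal (u y)
        ≤ C * ((volume Q)⁻¹ * ∫⁻ y in Q, ENNReal.ofReal (σ y)) ^ (p + 1)) :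
    ∃ C' : ℝ≥0∞, C' ≠ ⊤ ∧ ∀ f : (Fin n → ℝ) → ℝ, Measurable f →
      (∫⁻ x, ENNReal.ofReal |f x| ^ p * ENNReal.ofReal (σ x)) < ⊤ →
      ∀ lam : ℝ≥0∞, 0 < lam →
        ∫⁻ x in {x | lam < harmMax 𝒟
            (fun y => ENNReal.ofReal |f y| * (ENNReal.ofReal (σ y))⁻¹) x},
            ENNReal.ofReal (u x)
          ≤ C' * lam⁻¹ ^ p
              * ∫⁻ x, ENNReal.ofReal |f x| ^ p * ENNReal.ofReal (σ x) := by
  refine ⟨C, hC, fun f hf _ lam hlam => ?_⟩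
  rw [setOf_lt_harmMax, ← withDensity_apply', ← setLIntegral_univ, ← withDensity_apply']
  refine hD.measure_sUnion_le (sep_subset _ _) fun Q ⟨hQ𝒟, hQ⟩ => ?_
  obtain ⟨k, a, rfl⟩ := hD.exists_eq_halfOpenCube hQ𝒟
  rw [withDensity_apply', withDensity_apply']
  exact setLIntegral_le_of_lt_harmonicMean hp hf.abs.ennreal_ofReal.aemeasurable
    hσ.aestronglyMeasurable.aemeasurable.ennreal_ofReal.restrict (fun _ => ofReal_ne_top)
    volume_halfOpenCube_ne_zero volume_halfOpenCube_ne_top (hA _ hQ𝒟) hlam hQ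

/-- The dyadic two-weight `A_{-p}` condition implies the weak-type inequality
for the dyadic harmonic maximal operator. -/
theorem dyadic_Ap_implies_weak_type (n : ℕ) (𝒟 : Set (Set (Fin n → ℝ)))
    (hD : IsDyadicGrid 𝒟) (p : ℝ) (hp : 0 < p)
    (u σ : (Fin n → ℝ) → ℝ) (hu0 : 0 ≤ u) (hσ0 : 0 ≤ σ)
    (hu : LocallyIntegrable u volume) (hσ : LocallyIntegrable σ volume)
    (C : ℝ≥0∞) (hC : C ≠ ⊤)
    (hA : ∀ Q ∈ 𝒟, (volume Q)⁻¹ * ∫⁻ y in Q, ENNReal.ofReal (u y)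
        ≤ C * ((volume Q)⁻¹ * ∫⁻ y in Q, ENNReal.ofReal (σ y)) ^ (p + 1)) :
    ∃ C' : ℝ≥0∞, C' ≠ ⊤ ∧ ∀ f : (Fin n → ℝ) → ℝ, Measurable f →
      (∫⁻ x, ENNReal.ofReal |f x| ^ p * ENNReal.ofReal (σ x)) < ⊤ →
      ∀ lam : ℝ≥0∞, 0 < lam →
        ∫⁻ x in {x | lam < harmMax 𝒟
            (fun y => ENNReal.ofReal |f y| * (ENNReal.ofReal (σ y))⁻¹) x},
            ENNReal.ofReal (u x)
          ≤ C' * lam⁻¹ ^ p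
              * ∫⁻ x, ENNReal.ofReal |f x| ^ p * ENNReal.ofReal (σ x) :=
  dyadic_Ap_implies_weak_type_general n 𝒟 hD p hp u σ hσ C hC hA
end
end
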